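/- arXiv:2412.20330 — 3 statements merged into one kernel-verified Lean document; each statement's English description precedes it below -/
import Mathlib

section
/- Unbiasedness of the one-point gradient estimator (Lemma 2). Let x ∈ ℝ^d, μ > 0 and c ∈ ℝ, and suppose that F is L_F-Lipschitz for some constant L_F ≥ 0. Then the Gaussian smoothed function F_μ is differentiable at x and the one-point gradient estimator g₁(x,μ,c,u,ξ) := ((f(x+μ·u, ξ) − c)/μ)·u is unbiased for its gradient, i.e. ∫_{ℝ^d} ( ∫_Ξ ((f(x+μ·u, ξ) − c)/μ)·u dD(x+μ·u)(ξ) ) dγ(u) = ∇F_μ(x). -/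
/-!
With `φ` the density of the standard Gaussian `γ`, translation invariance of Lebesgue measure gives
`∫ G (u + w) dγ(u) = ∫ G v φ (v - w) dv`, which moves the parameter `w` into the density.
Differentiating under the integral sign (legitimate as soon as `G` grows at most linearly, e.g. for
Lipschitz `G`) and using `∇φ(u) = -φ(u) u` gives `∇_w ∫ G (u + w) dγ(u) = ∫ G u • u dγ(u)` at
`w = 0`. For `G u = F (x + μ • u)` and `w = μ⁻¹ • (y - x)` this reads
`∇F_μ(x) = μ⁻¹ ∫ F (x + μ • u) • u dγ(u)`; subtracting the baseline `c` changes nothing because `γ`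
is centred, and integrating out `ξ` turns the estimator into `((F (x + μ • u) - c) / μ) • u`.
-/

open MeasureTheory ProbabilityTheory

/-- The standard Gaussian measure on `EuclideanSpace ℝ (Fin d)`, i.e. the `d`-fold
product of the standard Gaussian measure `N(0,1)` on `ℝ`. -/
noncomputable def stdGaussian (d : ℕ) : Measure (EuclideanSpace ℝ (Fin d)) :=
  (Measure.pi fun _ : Fin d => gaussianReal 0 1).map
    (MeasurableEquiv.toLp 2 (Fin d → ℝ))

open Module
open scoped RealInnerProductSpace

lemma LipschitzWith.abs_comp_add_smul_le {E : Type*} [NormedAddCommGroup E] [NormedSpace ℝ E]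
    {F : E → ℝ} {K : NNReal} (hF : LipschitzWith K F)
    (x : E) (μ : ℝ) (u : E) : |F (x + μ • u)| ≤ (|F x| + K * |μ|) * (1 + ‖u‖) := by
  have hdist := hF.dist_le_mul (x + μ • u) x
  rw [Real.dist_eq, dist_eq_norm, add_sub_cancel_left, norm_smul, Real.norm_eq_abs] at hdist
  have := abs_sub_abs_le_abs_sub (F (x + μ • u)) (F x)
  nlinarith [mul_nonneg (abs_nonneg (F x)) (norm_nonneg u), mul_nonneg K.coe_nonneg (abs_nonneg μ)]

lemma one_add_pow_mul_exp_neg_mul_sq_le {b t : ℝ} (hb : 0 < b) (ht : 0 ≤ t) (n : ℕ) :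
    (1 + t) ^ n * Real.exp (-b * t ^ 2) ≤
      n.factorial * Real.exp (1 + 1 / (2 * b)) * Real.exp (-(b / 2) * t ^ 2) := by
  have hpow : (1 + t) ^ n ≤ n.factorial * Real.exp (1 + t) := by
    have := Real.pow_div_factorial_le_exp (1 + t) (by positivity) n
    rwa [div_le_iff₀ (by positivity), mul_comm] at this
  -- `t - (b/2) t²` is maximal at `t = 1/b`
  have hquad : t - b / 2 * t ^ 2 ≤ 1 / (2 * b) := by
    rw [le_div_iff₀ (by positivity)]
    nlinarith [sq_nonneg (b * t - 1)]
  calc (1 + t) ^ n * Real.exp (-b * t ^ 2)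
      ≤ n.factorial * Real.exp (1 + t) * Real.exp (-b * t ^ 2) := by gcongr
    _ = n.factorial * Real.exp (1 + (t - b / 2 * t ^ 2) + -(b / 2) * t ^ 2) := by
      rw [mul_assoc, ← Real.exp_add]; ring_nf
    _ ≤ n.factorial * Real.exp (1 + 1 / (2 * b) + -(b / 2) * t ^ 2) := by gcongr
    _ = _ := by rw [Real.exp_add, mul_assoc]

section FiniteDimensional

variable {V : Type*} [NormedAddCommGroup V] [InnerProductSpace ℝ V] [FiniteDimensional ℝ V]
  [MeasurableSpace V] [BorelSpace V]

lemma integrable_exp_neg_mul_sq_norm {b : ℝ} (hb : 0 < b) :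
    Integrable (fun v : V ↦ Real.exp (-b * ‖v‖ ^ 2)) := by
  refine (GaussianFourier.integrable_cexp_neg_mul_sq_norm_add (V := V) (b := b) hb 0 0).norm.congr
    (ae_of_all _ fun v ↦ ?_)
  simp [Complex.norm_exp, ← Complex.ofReal_pow]

lemma integrable_one_add_norm_pow_mul_exp_neg_mul_sq_norm {b : ℝ} (hb : 0 < b) (n : ℕ) :
    Integrable (fun v : V ↦ (1 + ‖v‖) ^ n * Real.exp (-b * ‖v‖ ^ 2)) := by
  refine ((integrable_exp_neg_mul_sq_norm (half_pos hb)).const_mul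
    (n.factorial * Real.exp (1 + 1 / (2 * b)))).mono (by fun_prop) (ae_of_all _ fun v ↦ ?_)
  rw [Real.norm_of_nonneg (by positivity), Real.norm_of_nonneg (by positivity)]
  exact one_add_pow_mul_exp_neg_mul_sq_le hb (norm_nonneg v) n

end FiniteDimensional

namespace ProbabilityTheory

variable {V : Type*} [NormedAddCommGroup V] [InnerProductSpace ℝ V]

variable (V) in
noncomputable def stdGaussianPDF (v : V) : ℝ :=
  Real.exp (-‖v‖ ^ 2 / 2) / (2 * Real.pi) ^ (finrank ℝ V / 2 : ℝ)

lemma stdGaussianPDF_nonneg (v : V) : 0 ≤ stdGaussianPDF V v := by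
  unfold stdGaussianPDF; positivity

@[fun_prop]
lemma continuous_stdGaussianPDF : Continuous (stdGaussianPDF V) := by
  unfold stdGaussianPDF; fun_prop

lemma hasFDerivAt_stdGaussianPDF (u : V) :
    HasFDerivAt (stdGaussianPDF V) (-stdGaussianPDF V u • innerSL ℝ u) u := by
  have h := HasFDerivAt.mul_const
    ((hasStrictFDerivAt_norm_sq u).hasFDerivAt.const_mul (-1 / 2)).exp
    ((2 * Real.pi) ^ (finrank ℝ V / 2 : ℝ))⁻¹
  refine (h.congr_fderiv ?_).congr_of_eventuallyEq (.of_forall fun v ↦ ?_)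
  · ext w
    simp only [stdGaussianPDF, smul_apply, innerSL_apply_apply, smul_eq_mul]
    ring_nf
  · simp only [stdGaussianPDF, div_eq_mul_inv]
    ring_nf

lemma hasFDerivAt_stdGaussianPDF_sub (v w : V) :
    HasFDerivAt (fun w ↦ stdGaussianPDF V (v - w))
      (stdGaussianPDF V (v - w) • innerSL ℝ (v - w)) w := by
  refine ((hasFDerivAt_stdGaussianPDF (v - w)).comp w
    ((hasFDerivAt_id w).const_sub v)).congr_fderiv ?_
  ext z
  simp

lemma stdGaussianPDF_sub_le (v : V) {w : V} (hw : ‖w‖ ≤ 1) :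
    stdGaussianPDF V (v - w) ≤
      Real.exp (1 / 2) * Real.exp (-(1 / 4) * ‖v‖ ^ 2) / (2 * Real.pi) ^ (finrank ℝ V / 2 : ℝ) := by
  unfold stdGaussianPDF
  gcongr
  rw [← Real.exp_add, Real.exp_le_exp]
  -- `‖v‖² ≤ 2 ‖v - w‖² + 2 ‖w‖²`
  have hsq : ‖v‖ ^ 2 ≤ (‖v - w‖ + ‖w‖) ^ 2 :=
    pow_le_pow_left₀ (norm_nonneg v) (norm_le_norm_sub_add v w) 2
  nlinarith [norm_nonneg w, sq_nonneg (‖v - w‖ - ‖w‖)]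

variable [FiniteDimensional ℝ V] [MeasurableSpace V] [BorelSpace V]

lemma integrable_stdGaussianPDF : Integrable (stdGaussianPDF V) := by
  refine ((integrable_exp_neg_mul_sq_norm (V := V) (b := 1 / 2) (by norm_num)).div_const
    ((2 * Real.pi) ^ (finrank ℝ V / 2 : ℝ))).congr (ae_of_all _ fun v ↦ ?_)
  simp only [stdGaussianPDF]
  ring_nf

theorem stdGaussian_eq_withDensity :
    stdGaussian V = volume.withDensity (fun v ↦ ENNReal.ofReal (stdGaussianPDF V v)) := by
  have := isFiniteMeasure_withDensity_ofReal (integrable_stdGaussianPDF (V := V)).hasFiniteIntegral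
  -- Both sides have characteristic function `exp (-‖t‖² / 2)`: on the right this is the Fourier
  -- transform of a Gaussian.
  refine Measure.ext_of_charFun (funext fun t ↦ ?_)
  rw [charFun_stdGaussian, charFun_apply, integral_withDensity_eq_integral_toReal_smul
    (by fun_prop) (ae_of_all _ fun _ ↦ ENNReal.ofReal_lt_top)]
  have hK : (2 * Real.pi) ^ (finrank ℝ V / 2 : ℝ) ≠ 0 := by positivity
  have key := GaussianFourier.integral_cexp_neg_mul_sq_norm_add (V := V) (b := 1 / 2)
    (by norm_num) Complex.I t
  have hcpow : ((Real.pi : ℂ) / (1 / 2)) ^ (finrank ℝ V / 2 : ℂ) =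
      (((2 * Real.pi) ^ (finrank ℝ V / 2 : ℝ) : ℝ) : ℂ) := by
    rw [Complex.ofReal_cpow (by positivity)]
    push_cast
    ring_nf
  calc Complex.exp (-‖t‖ ^ 2 / 2)
      = (∫ v : V, Complex.exp (-(1 / 2) * ‖v‖ ^ 2 + Complex.I * ⟪t, v⟫)) /
          (((2 * Real.pi) ^ (finrank ℝ V / 2 : ℝ) : ℝ) : ℂ) := by
        rw [key, hcpow, mul_div_cancel_left₀ _ (by exact_mod_cast hK)]
        congr 1
        rw [Complex.I_sq]
        ring
    _ = _ := by
        rw [← integral_div]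
        congr 1 with v
        rw [ENNReal.toReal_ofReal (stdGaussianPDF_nonneg v), Complex.real_smul, stdGaussianPDF,
          Complex.ofReal_div, Complex.ofReal_exp, div_mul_eq_mul_div, ← Complex.exp_add,
          real_inner_comm]
        push_cast
        ring_nf

lemma integral_stdGaussian_eq_integral_smul {E : Type*} [NormedAddCommGroup E] [NormedSpace ℝ E]
    (g : V → E) :
    ∫ v, g v ∂stdGaussian V = ∫ v, stdGaussianPDF V v • g v := by
  rw [stdGaussian_eq_withDensity, integral_withDensity_eq_integral_toReal_smul (by fun_prop)
    (ae_of_all _ fun _ ↦ ENNReal.ofReal_lt_top)]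
  simp_rw [ENNReal.toReal_ofReal (stdGaussianPDF_nonneg _)]

lemma integrable_stdGaussian_iff {E : Type*} [NormedAddCommGroup E] [NormedSpace ℝ E]
    {g : V → E} :
    Integrable g (stdGaussian V) ↔ Integrable (fun v ↦ stdGaussianPDF V v • g v) := by
  rw [stdGaussian_eq_withDensity, integrable_withDensity_iff_integrable_smul' (by fun_prop)
    (ae_of_all _ fun _ ↦ ENNReal.ofReal_lt_top)]
  simp_rw [ENNReal.toReal_ofReal (stdGaussianPDF_nonneg _)]

lemma integral_comp_add_right_stdGaussian {E : Type*} [NormedAddCommGroup E] [NormedSpace ℝ E]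
    (g : V → E) (w : V) :
    ∫ u, g (u + w) ∂stdGaussian V = ∫ v, stdGaussianPDF V (v - w) • g v := by
  rw [integral_stdGaussian_eq_integral_smul, ← integral_sub_right_eq_self _ w]
  simp

lemma integrable_stdGaussian_of_norm_le {E : Type*} [NormedAddCommGroup E] {g : V → E}
    (hg : AEStronglyMeasurable g (stdGaussian V)) {C : ℝ} {n : ℕ}
    (hgC : ∀ v, ‖g v‖ ≤ C * (1 + ‖v‖) ^ n) : Integrable g (stdGaussian V) := by
  have hpow : Integrable (fun v : V ↦ (1 + ‖v‖) ^ n) (stdGaussian V) := by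
    rw [integrable_stdGaussian_iff]
    refine ((integrable_one_add_norm_pow_mul_exp_neg_mul_sq_norm (V := V) (b := 1 / 2)
      (by norm_num) n).div_const ((2 * Real.pi) ^ (finrank ℝ V / 2 : ℝ))).congr
      (ae_of_all _ fun v ↦ ?_)
    simp only [stdGaussianPDF, smul_eq_mul]
    ring_nf
  exact (hpow.const_mul C).mono' hg (ae_of_all _ hgC)

lemma integrable_smul_id_stdGaussian {G : V → ℝ} (hG : AEStronglyMeasurable G (stdGaussian V))
    {C : ℝ} (hGC : ∀ v, |G v| ≤ C * (1 + ‖v‖)) :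
    Integrable (fun v ↦ G v • v) (stdGaussian V) := by
  have hC : 0 ≤ C := by simpa using (abs_nonneg _).trans (hGC 0)
  refine integrable_stdGaussian_of_norm_le (hG.smul aestronglyMeasurable_id) (C := C) (n := 2)
    fun v ↦ ?_
  rw [norm_smul, Real.norm_eq_abs]
  calc |G v| * ‖v‖ ≤ C * (1 + ‖v‖) * (1 + ‖v‖) := by gcongr; exacts [hGC v, by linarith]
    _ = C * (1 + ‖v‖) ^ 2 := by ring

theorem hasGradientAt_integral_add_stdGaussian {G : V → ℝ} (hG : Measurable G) {C : ℝ}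
    (hGC : ∀ v, |G v| ≤ C * (1 + ‖v‖)) :
    HasGradientAt (fun w ↦ ∫ u, G (u + w) ∂stdGaussian V) (∫ u, G u • u ∂stdGaussian V) 0 := by
  have hC : 0 ≤ C := by simpa using (abs_nonneg _).trans (hGC 0)
  set bound : V → ℝ := fun v ↦ Real.exp (1 / 2) * C / (2 * Real.pi) ^ (finrank ℝ V / 2 : ℝ) *
    ((1 + ‖v‖) ^ 2 * Real.exp (-(1 / 4) * ‖v‖ ^ 2))
  have hbound : ∀ v, ∀ w ∈ Metric.ball (0 : V) 1,
      ‖(stdGaussianPDF V (v - w) * G v) • innerSL ℝ (v - w)‖ ≤ bound v := by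
    intro v w hw
    rw [mem_ball_zero_iff] at hw
    rw [norm_smul, innerSL_apply_norm, Real.norm_eq_abs, abs_mul,
      abs_of_nonneg (stdGaussianPDF_nonneg _)]
    have hvw : ‖v - w‖ ≤ 1 + ‖v‖ := by linarith [norm_sub_le v w]
    calc stdGaussianPDF V (v - w) * |G v| * ‖v - w‖
        ≤ Real.exp (1 / 2) * Real.exp (-(1 / 4) * ‖v‖ ^ 2) /
            (2 * Real.pi) ^ (finrank ℝ V / 2 : ℝ) * (C * (1 + ‖v‖)) * (1 + ‖v‖) := by
          gcongr
          exacts [stdGaussianPDF_sub_le v hw.le, hGC v]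
      _ = bound v := by simp only [bound]; ring
  have hbound_int : Integrable bound :=
    (integrable_one_add_norm_pow_mul_exp_neg_mul_sq_norm (by norm_num) 2).const_mul _
  have hG_int : Integrable (fun v ↦ stdGaussianPDF V (v - 0) * G v) := by
    simpa using integrable_stdGaussian_iff.1 <|
      integrable_stdGaussian_of_norm_le hG.aestronglyMeasurable (n := 1) (by simpa using hGC)
  have hderiv := hasFDerivAt_integral_of_dominated_of_fderiv_le
    (Metric.ball_mem_nhds (0 : V) one_pos) (.of_forall fun w ↦ by fun_prop) hG_int
    (by fun_prop) (ae_of_all _ hbound) hbound_int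
    (ae_of_all _ fun v w _ ↦ ((hasFDerivAt_stdGaussianPDF_sub v w).mul_const (G v)).congr_fderiv
      (by rw [smul_smul, mul_comm]))
  have hderiv_eq : ∫ v, (stdGaussianPDF V (v - 0) * G v) • innerSL ℝ (v - 0) =
      InnerProductSpace.toDual ℝ V (∫ u, G u • u ∂stdGaussian V) := by
    change _ = innerSL ℝ _
    rw [integral_stdGaussian_eq_integral_smul, ← ContinuousLinearMap.integral_comp_comm _
      (integrable_stdGaussian_iff.1 (integrable_smul_id_stdGaussian hG.aestronglyMeasurable hGC))]
    simp only [sub_zero, map_smul, smul_smul]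
  rw [hasGradientAt_iff_hasFDerivAt, funext (integral_comp_add_right_stdGaussian G), ← hderiv_eq]
  exact hderiv

theorem integral_sub_const_smul_stdGaussian {G : V → ℝ}
    (hG : Integrable (fun v ↦ G v • v) (stdGaussian V)) (c : ℝ) :
    ∫ v, (G v - c) • v ∂stdGaussian V = ∫ v, G v • v ∂stdGaussian V := by
  have hid : Integrable (fun v : V ↦ c • v) (stdGaussian V) := IsGaussian.integrable_id.smul c
  simp_rw [sub_smul]
  rw [integral_sub hG hid, integral_smul, integral_id_stdGaussian,
    smul_zero, sub_zero]

theorem hasGradientAt_integral_add_smul_stdGaussian {F : V → ℝ} {K : NNReal}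
    (hF : LipschitzWith K F) {μ : ℝ} (hμ : μ ≠ 0) (x : V) (c : ℝ) :
    HasGradientAt (fun y ↦ ∫ u, F (y + μ • u) ∂stdGaussian V)
      (∫ u, ((F (x + μ • u) - c) / μ) • u ∂stdGaussian V) x := by
  set G : V → ℝ := fun u ↦ F (x + μ • u)
  have hG : Measurable G := (hF.continuous.comp (by fun_prop)).measurable
  have hGC : ∀ u, |G u| ≤ (|F x| + K * |μ|) * (1 + ‖u‖) := hF.abs_comp_add_smul_le x μ
  have hcomp : (fun y ↦ ∫ u, F (y + μ • u) ∂stdGaussian V) =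
      (fun w ↦ ∫ u, G (u + w) ∂stdGaussian V) ∘ fun y ↦ μ⁻¹ • (y - x) := by
    ext y
    simp only [G, Function.comp_apply, smul_add, smul_smul, mul_inv_cancel₀ hμ, one_smul]
    congr 1 with u
    congr 1
    abel
  have hgrad := hasGradientAt_integral_add_stdGaussian hG hGC
  have haffine : HasFDerivAt (fun y : V ↦ μ⁻¹ • (y - x)) (μ⁻¹ • ContinuousLinearMap.id ℝ V) x :=
    ((hasFDerivAt_id x).sub_const x).const_smul μ⁻¹
  have hchain : HasGradientAt (fun y ↦ ∫ u, F (y + μ • u) ∂stdGaussian V)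
      (μ⁻¹ • ∫ u, G u • u ∂stdGaussian V) x := by
    rw [hasGradientAt_iff_hasFDerivAt] at hgrad ⊢
    rw [hcomp]
    refine ((show μ⁻¹ • (x - x) = 0 by simp) ▸ hgrad).comp x haffine |>.congr_fderiv ?_
    ext v
    simp
  have hbaseline := integral_sub_const_smul_stdGaussian
    (integrable_smul_id_stdGaussian hG.aestronglyMeasurable hGC) c
  simp_rw [div_eq_inv_mul, mul_smul]
  rwa [integral_smul, hbaseline]

end ProbabilityTheory

theorem stdGaussian_eq_stdGaussian_euclideanSpace (d : ℕ) :
    stdGaussian d = ProbabilityTheory.stdGaussian (EuclideanSpace ℝ (Fin d)) := by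
  rw [← map_pi_eq_stdGaussian, _root_.stdGaussian, MeasurableEquiv.coe_toLp]

theorem one_point_estimator_unbiased_general
    (d : ℕ) {Ξ : Type*} [MeasurableSpace Ξ]
    (D : Kernel (EuclideanSpace ℝ (Fin d)) Ξ) [IsMarkovKernel D]
    (f : EuclideanSpace ℝ (Fin d) → Ξ → ℝ)
    (hf_int : ∀ y, Integrable (f y) (D y))
    (F : EuclideanSpace ℝ (Fin d) → ℝ)
    (hF : ∀ y, F y = ∫ ξ, f y ξ ∂(D y))
    (L_F : ℝ) (hFLip : LipschitzWith L_F.toNNReal F)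
    (μ : ℝ) (hμ : 0 < μ) (c : ℝ) (x : EuclideanSpace ℝ (Fin d))
    (Fμ : EuclideanSpace ℝ (Fin d) → ℝ)
    (hFμ : ∀ y, Fμ y = ∫ u, F (y + μ • u) ∂(stdGaussian d)) :
    DifferentiableAt ℝ Fμ x ∧
      (∫ u, (∫ ξ, ((f (x + μ • u) ξ - c) / μ) • u ∂(D (x + μ • u))) ∂(stdGaussian d))
        = gradient Fμ x := by
  have hestimator : ∀ u, ∫ ξ, ((f (x + μ • u) ξ - c) / μ) • u ∂(D (x + μ • u)) =
      ((F (x + μ • u) - c) / μ) • u := by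
    intro u
    rw [integral_smul_const, integral_div, integral_sub (hf_int _) (integrable_const c),
      integral_const, ← hF]
    simp
  have hgrad : HasGradientAt Fμ (∫ u, ((F (x + μ • u) - c) / μ) • u ∂stdGaussian d) x := by
    rw [funext hFμ, stdGaussian_eq_stdGaussian_euclideanSpace]
    exact hasGradientAt_integral_add_smul_stdGaussian hFLip hμ.ne' x c
  simp_rw [hestimator]
  exact ⟨hgrad.differentiableAt, hgrad.gradient.symm⟩

/-- Unbiasedness of the one-point gradient estimator (Lemma 2). -/
theorem one_point_estimator_unbiased
    (d : ℕ) (hd : 0 < d) {Ξ : Type*} [MeasurableSpace Ξ]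
    (D : Kernel (EuclideanSpace ℝ (Fin d)) Ξ) [IsMarkovKernel D]
    (f : EuclideanSpace ℝ (Fin d) → Ξ → ℝ)
    (hf_meas : Measurable (Function.uncurry f))
    (hf_int : ∀ y, Integrable (f y) (D y))
    (F : EuclideanSpace ℝ (Fin d) → ℝ)
    (hF : ∀ y, F y = ∫ ξ, f y ξ ∂(D y))
    (L_F : ℝ) (hL_F : 0 ≤ L_F) (hFLip : LipschitzWith L_F.toNNReal F)
    (μ : ℝ) (hμ : 0 < μ) (c : ℝ) (x : EuclideanSpace ℝ (Fin d))
    (Fμ : EuclideanSpace ℝ (Fin d) → ℝ)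
    (hFμ : ∀ y, Fμ y = ∫ u, F (y + μ • u) ∂(stdGaussian d)) :
    DifferentiableAt ℝ Fμ x ∧
      (∫ u, (∫ ξ, ((f (x + μ • u) ξ - c) / μ) • u ∂(D (x + μ • u))) ∂(stdGaussian d))
        = gradient Fμ x :=
  one_point_estimator_unbiased_general d D f hf_int F hF L_F hFLip μ hμ c x Fμ hFμ
end

section
/- Second-moment bound for the mini-batch one-point gradient estimator (Lemma 3). Suppose there is σ ≥ 0 such that for every y ∈ ℝ^d the function f(y,·) is square-integrable with respect to D(y) and ∫_Ξ (F(y) − f(y,ξ))² dD(y)(ξ) ≤ σ² (Assumption 1), and suppose F is H_F-smooth. Then for every x ∈ ℝ^d, μ > 0, c ∈ ℝ and every integer m ≥ 1, ∫_{ℝ^d} ∫_{Ξ^m} ‖ (1/m) · Σ_{j=1}^{m} ((f(x+μ·u, ξⱼ) − c)/μ)·u ‖² d(D(x+μ·u))^{⊗m}(ξ₁,…,ξ_m) dγ(u) ≤ (3/2)·μ²·H_F²·(d+6)³ + 6·(d+4)·‖∇F(x)‖² + 3·σ²·d/(μ²·m) + 3·d·(F(x) − c)²/μ², where (D(y))^{⊗m}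 denotes the m-fold product measure (i.i.d. samples from D(y)). -/
open MeasureTheory ProbabilityTheory

/-!
Conditionally on the direction `u`, the mini-batch estimator is `u` times the mean of `m` i.i.d.
copies of `b(ξ) = (f(x + μu, ξ) - c)/μ`, so its squared norm has expectation
`(Var b / m + (E b)²) ‖u‖²`, with `Var b ≤ σ²/μ²` by Assumption 1. Writing
`E b = (F(x + μu) - F x - μ⟪∇F x, u⟫)/μ + ⟪∇F x, u⟫ + (F x - c)/μ`, the first term is at most
`H_F μ ‖u‖²/2` in absolute value by smoothness, and `(p + q + r)² ≤ 3(p² + q² + r²)`. What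
remains are the Gaussian moments `E‖u‖² = d`, `E‖u‖⁶ = d(d+2)(d+4)` and
`E ⟪g, u⟫²‖u‖² = (d+2)‖g‖²`, computed by induction on the dimension from the one-dimensional
moments `E z^(k+2) = (k+1) E z^k`.
-/

open Real Filter Finset Set
open scoped Nat NNReal Topology RealInnerProductSpace

lemma integrable_pow_mul_exp_neg_mul_sq {b : ℝ} (hb : 0 < b) (k : ℕ) :
    Integrable fun x : ℝ => x ^ k * exp (-b * x ^ 2) := by
  simpa using integrable_rpow_mul_exp_neg_mul_sq hb (s := k) (by linarith [k.cast_nonneg (α := ℝ)])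

lemma tendsto_pow_mul_exp_neg_mul_sq_cocompact {b : ℝ} (hb : 0 < b) (k : ℕ) :
    Tendsto (fun x : ℝ => x ^ k * exp (-b * x ^ 2)) (cocompact ℝ) (𝓝 0) := by
  refine squeeze_zero_norm (fun x => ?_) (tendsto_rpow_abs_mul_exp_neg_mul_sq_cocompact hb k)
  simp [abs_of_pos (exp_pos _)]

/-- Integrate `(x ^ (k + 1) * exp (-b * x ^ 2))'` over `ℝ`. -/
lemma integral_pow_add_two_mul_exp_neg_mul_sq {b : ℝ} (hb : 0 < b) (k : ℕ) :
    ∫ x : ℝ, x ^ (k + 2) * exp (-b * x ^ 2)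
      = (k + 1) / (2 * b) * ∫ x : ℝ, x ^ k * exp (-b * x ^ 2) := by
  have hderiv (x : ℝ) : HasDerivAt (fun x => x ^ (k + 1) * exp (-b * x ^ 2))
      ((k + 1) * (x ^ k * exp (-b * x ^ 2)) - 2 * b * (x ^ (k + 2) * exp (-b * x ^ 2))) x := by
    refine ((hasDerivAt_pow (k + 1) x).fun_mul
      (((hasDerivAt_pow 2 x).const_mul (-b)).exp)).congr_deriv ?_
    push_cast
    ring
  have hk := (integrable_pow_mul_exp_neg_mul_sq hb k).const_mul (k + 1 : ℝ)
  have hk2 := (integrable_pow_mul_exp_neg_mul_sq hb (k + 2)).const_mul (2 * b)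
  have hlim := tendsto_pow_mul_exp_neg_mul_sq_cocompact hb (k + 1)
  rw [cocompact_eq_atBot_atTop, tendsto_sup] at hlim
  have hibp := integral_of_hasDerivAt_of_tendsto hderiv (hk.sub hk2) hlim.1 hlim.2
  rw [integral_sub hk hk2, integral_const_mul, integral_const_mul, sub_self, sub_eq_zero] at hibp
  rw [div_mul_eq_mul_div, hibp]
  field_simp

lemma integral_pow_add_two_gaussianReal (k : ℕ) :
    ∫ x, x ^ (k + 2) ∂gaussianReal 0 1 = (k + 1) * ∫ x, x ^ k ∂gaussianReal 0 1 := by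
  have hpdf : gaussianPDFReal 0 1 = fun x => (√(2 * π))⁻¹ * exp (-(1 / 2) * x ^ 2) := by
    ext x
    simp only [gaussianPDFReal, NNReal.coe_one, mul_one, sub_zero]
    ring_nf
  simp only [integral_gaussianReal_eq_integral_smul one_ne_zero, hpdf, smul_eq_mul, mul_assoc,
    integral_const_mul]
  simp_rw [mul_comm (exp _)]
  rw [integral_pow_add_two_mul_exp_neg_mul_sq (by norm_num)]
  ring

/-- For `k = 0` the truncated `(k - 1)‼` is `0‼ = 1`. -/
lemma integral_pow_gaussianReal (k : ℕ) :
    ∫ x, x ^ k ∂gaussianReal 0 1 = if Even k then ((k - 1)‼ : ℝ) else 0 := by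
  induction k using Nat.twoStepInduction with
  | zero => simp
  | one => simp [integral_id_gaussianReal]
  | more k ih _ =>
    rw [integral_pow_add_two_gaussianReal, ih]
    rcases k with _ | k
    · simp
    · simp only [Nat.even_add_one, not_not, Nat.add_one_sub_one, add_tsub_cancel_right,
        Nat.doubleFactorial_add_two]
      split_ifs <;> push_cast <;> ring

lemma integrable_pow_gaussianReal (μ : ℝ) (v : ℝ≥0) (k : ℕ) :
    Integrable (fun x => x ^ k) (gaussianReal μ v) :=
  (memLp_id_gaussianReal k).integrable_norm_pow'.mono' (by fun_prop) (ae_of_all _ fun x => by simp)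

section Pi

variable {E : Type*} [MeasurableSpace E] {μ : Measure E} [SigmaFinite μ] {n : ℕ}

lemma integral_pi_succ_mul_tail (f : E → ℝ) (g : (Fin n → E) → ℝ) :
    ∫ x, f (x 0) * g (Fin.tail x) ∂Measure.pi (fun _ : Fin (n + 1) => μ)
      = (∫ a, f a ∂μ) * ∫ y, g y ∂Measure.pi fun _ => μ := by
  rw [← integral_prod_mul, ← (measurePreserving_piFinSuccAbove (fun _ => μ) 0).integral_comp']
  rfl

lemma MeasureTheory.Integrable.pi_succ_mul_tail {f : E → ℝ} {g : (Fin n → E) → ℝ}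
    (hf : Integrable f μ) (hg : Integrable g (Measure.pi fun _ => μ)) :
    Integrable (fun x => f (x 0) * g (Fin.tail x)) (Measure.pi fun _ : Fin (n + 1) => μ) :=
  ((measurePreserving_piFinSuccAbove (fun _ => μ) 0).integrable_comp_emb
    (MeasurableEquiv.measurableEmbedding _)).2 (hf.mul_prod hg)

end Pi

noncomputable abbrev stdGaussianPi (n : ℕ) : Measure (Fin n → ℝ) :=
  Measure.pi fun _ => gaussianReal 0 1

def innerPowMulNormSqPow {n : ℕ} (g : Fin n → ℝ) (j p : ℕ) (x : Fin n → ℝ) : ℝ :=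
  (∑ i, g i * x i) ^ j * (∑ i, x i ^ 2) ^ p

lemma innerPowMulNormSqPow_succ {n : ℕ} (g x : Fin (n + 1) → ℝ) (j p : ℕ) :
    innerPowMulNormSqPow g j p x = ∑ k ∈ range (j + 1), ∑ l ∈ range (p + 1),
      (j.choose k * p.choose l * g 0 ^ k * x 0 ^ (k + 2 * l))
        * innerPowMulNormSqPow (Fin.tail g) (j - k) (p - l) (Fin.tail x) := by
  simp only [innerPowMulNormSqPow, Fin.sum_univ_succ, add_pow, sum_mul_sum, Fin.tail]
  refine sum_congr rfl fun k _ => sum_congr rfl fun l _ => ?_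
  ring

lemma integrable_innerPowMulNormSqPow {n : ℕ} (g : Fin n → ℝ) (j p : ℕ) :
    Integrable (innerPowMulNormSqPow g j p) (stdGaussianPi n) := by
  induction n generalizing j p with
  | zero => simp
  | succ n ih =>
    simp_rw [funext (innerPowMulNormSqPow_succ g · j p)]
    refine integrable_finsetSum _ fun k _ => integrable_finsetSum _ fun l _ => ?_
    exact Integrable.pi_succ_mul_tail ((integrable_pow_gaussianReal 0 1 _).const_mul _) (ih _ _ _)

lemma integral_innerPowMulNormSqPow_succ {n : ℕ} (g : Fin (n + 1) → ℝ) (j p : ℕ) :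
    ∫ x, innerPowMulNormSqPow g j p x ∂stdGaussianPi (n + 1)
      = ∑ k ∈ range (j + 1), ∑ l ∈ range (p + 1), j.choose k * p.choose l * g 0 ^ k
          * (∫ a, a ^ (k + 2 * l) ∂gaussianReal 0 1)
          * ∫ y, innerPowMulNormSqPow (Fin.tail g) (j - k) (p - l) y ∂stdGaussianPi n := by
  have hint (k l : ℕ) : Integrable (fun x : Fin (n + 1) → ℝ =>
      (j.choose k * p.choose l * g 0 ^ k * x 0 ^ (k + 2 * l))
        * innerPowMulNormSqPow (Fin.tail g) (j - k) (p - l) (Fin.tail x)) (stdGaussianPi (n + 1)) :=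
    Integrable.pi_succ_mul_tail ((integrable_pow_gaussianReal 0 1 _).const_mul _)
      (integrable_innerPowMulNormSqPow _ _ _)
  simp_rw [innerPowMulNormSqPow_succ g _ j p]
  rw [integral_finsetSum _ fun k _ => integrable_finsetSum _ fun l _ => hint k l]
  refine sum_congr rfl fun k _ => ?_
  rw [integral_finsetSum _ fun l _ => hint k l]
  refine sum_congr rfl fun l _ => ?_
  rw [integral_pi_succ_mul_tail
    (fun a => j.choose k * p.choose l * g 0 ^ k * a ^ (k + 2 * l)), integral_const_mul]

lemma integral_sum_sq_stdGaussianPi (n : ℕ) :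
    ∫ x, ∑ i, x i ^ 2 ∂stdGaussianPi n = n := by
  induction n with
  | zero => simp
  | succ n ih =>
    have := integral_innerPowMulNormSqPow_succ (n := n) 0 0 1
    simp [innerPowMulNormSqPow, sum_range_succ, integral_pow_gaussianReal, Nat.doubleFactorial,
      Nat.even_iff, ih] at this
    rw [this]
    push_cast
    ring

lemma integral_sum_sq_sq_stdGaussianPi (n : ℕ) :
    ∫ x, (∑ i, x i ^ 2) ^ 2 ∂stdGaussianPi n = n * (n + 2) := by
  induction n with
  | zero => simp
  | succ n ih =>
    have := integral_innerPowMulNormSqPow_succ (n := n) 0 0 2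
    simp [innerPowMulNormSqPow, sum_range_succ, integral_pow_gaussianReal, Nat.doubleFactorial,
      Nat.even_iff, ih, integral_sum_sq_stdGaussianPi] at this
    rw [this]
    push_cast
    ring

lemma integral_sum_sq_pow_three_stdGaussianPi (n : ℕ) :
    ∫ x, (∑ i, x i ^ 2) ^ 3 ∂stdGaussianPi n = n * (n + 2) * (n + 4) := by
  induction n with
  | zero => simp
  | succ n ih =>
    have := integral_innerPowMulNormSqPow_succ (n := n) 0 0 3
    simp [innerPowMulNormSqPow, sum_range_succ, integral_pow_gaussianReal, Nat.doubleFactorial,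
      Nat.even_iff, ih, integral_sum_sq_stdGaussianPi, integral_sum_sq_sq_stdGaussianPi] at this
    rw [this]
    push_cast
    ring

lemma integral_sum_mul_sq_stdGaussianPi {n : ℕ} (g : Fin n → ℝ) :
    ∫ x, (∑ i, g i * x i) ^ 2 ∂stdGaussianPi n = ∑ i, g i ^ 2 := by
  induction n with
  | zero => simp
  | succ n ih =>
    have := integral_innerPowMulNormSqPow_succ g 2 0
    simp [innerPowMulNormSqPow, sum_range_succ, integral_pow_gaussianReal, Nat.doubleFactorial,
      Nat.even_iff, ih] at this
    rw [this, Fin.sum_univ_succ]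
    simp only [Fin.tail]
    ring

lemma integral_sum_mul_sq_mul_sum_sq_stdGaussianPi {n : ℕ} (g : Fin n → ℝ) :
    ∫ x, (∑ i, g i * x i) ^ 2 * ∑ i, x i ^ 2 ∂stdGaussianPi n = (n + 2) * ∑ i, g i ^ 2 := by
  induction n with
  | zero => simp
  | succ n ih =>
    have := integral_innerPowMulNormSqPow_succ g 2 1
    simp [innerPowMulNormSqPow, sum_range_succ, integral_pow_gaussianReal, Nat.doubleFactorial,
      Nat.even_iff, ih, integral_sum_sq_stdGaussianPi, integral_sum_mul_sq_stdGaussianPi] at this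
    rw [this, Fin.sum_univ_succ]
    simp only [Fin.tail]
    push_cast
    ring

section StdGaussian

variable {d : ℕ}

lemma norm_toLp_sq (x : Fin d → ℝ) : ‖WithLp.toLp 2 x‖ ^ 2 = ∑ i, x i ^ 2 := by
  simp [EuclideanSpace.real_norm_sq_eq]

lemma inner_toLp (g : EuclideanSpace ℝ (Fin d)) (x : Fin d → ℝ) :
    ⟪g, WithLp.toLp 2 x⟫ = ∑ i, g i * x i := by
  simp [PiLp.inner_apply, mul_comm]

lemma integral_stdGaussian (h : EuclideanSpace ℝ (Fin d) → ℝ) :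
    ∫ u, h u ∂stdGaussian d = ∫ x, h (WithLp.toLp 2 x) ∂stdGaussianPi d :=
  integral_map_equiv _ h

lemma integrable_inner_pow_mul_norm_sq_pow_stdGaussian (g : EuclideanSpace ℝ (Fin d)) (j p : ℕ) :
    Integrable (fun u => ⟪g, u⟫ ^ j * (‖u‖ ^ 2) ^ p) (stdGaussian d) := by
  refine (integrable_map_equiv _ _).2 ?_
  simp only [Function.comp_def, MeasurableEquiv.coe_toLp, norm_toLp_sq, inner_toLp]
  exact integrable_innerPowMulNormSqPow (fun i => g i) j p

lemma integral_norm_sq_stdGaussian : ∫ u, ‖u‖ ^ 2 ∂stdGaussian d = d := by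
  simp only [integral_stdGaussian, norm_toLp_sq, integral_sum_sq_stdGaussianPi]

lemma integral_norm_sq_pow_three_stdGaussian :
    ∫ u, (‖u‖ ^ 2) ^ 3 ∂stdGaussian d = d * (d + 2) * (d + 4) := by
  simp only [integral_stdGaussian, norm_toLp_sq, integral_sum_sq_pow_three_stdGaussianPi]

lemma integral_inner_sq_mul_norm_sq_stdGaussian (g : EuclideanSpace ℝ (Fin d)) :
    ∫ u, ⟪g, u⟫ ^ 2 * ‖u‖ ^ 2 ∂stdGaussian d = (d + 2) * ‖g‖ ^ 2 := by
  simp only [integral_stdGaussian, inner_toLp, EuclideanSpace.real_norm_sq_eq,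
    integral_sum_mul_sq_mul_sum_sq_stdGaussianPi]

lemma integral_stdGaussian_le_of_le_moments {h : EuclideanSpace ℝ (Fin d) → ℝ}
    (g : EuclideanSpace ℝ (Fin d)) (A B C : ℝ) (h₀ : ∀ u, 0 ≤ h u)
    (hle : ∀ u, h u ≤ A * ‖u‖ ^ 2 + B * (‖u‖ ^ 2) ^ 3 + C * (⟪g, u⟫ ^ 2 * ‖u‖ ^ 2)) :
    ∫ u, h u ∂stdGaussian d ≤ A * d + B * (d * (d + 2) * (d + 4)) + C * ((d + 2) * ‖g‖ ^ 2) := by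
  have h₁ : Integrable (fun u => ‖u‖ ^ 2) (stdGaussian d) := by
    simpa using integrable_inner_pow_mul_norm_sq_pow_stdGaussian g 0 1
  have h₃ : Integrable (fun u => (‖u‖ ^ 2) ^ 3) (stdGaussian d) := by
    simpa using integrable_inner_pow_mul_norm_sq_pow_stdGaussian g 0 3
  have h₂₁ : Integrable (fun u => ⟪g, u⟫ ^ 2 * ‖u‖ ^ 2) (stdGaussian d) := by
    simpa using integrable_inner_pow_mul_norm_sq_pow_stdGaussian g 2 1
  have h₁₃ := (h₁.const_mul A).fun_add (h₃.const_mul B)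
  refine (integral_mono_of_nonneg (ae_of_all _ h₀) (h₁₃.fun_add (h₂₁.const_mul C))
    (ae_of_all _ hle)).trans_eq ?_
  rw [integral_add h₁₃ (h₂₁.const_mul C), integral_add (h₁.const_mul A) (h₃.const_mul B),
    integral_const_mul, integral_const_mul, integral_const_mul, integral_norm_sq_stdGaussian,
    integral_norm_sq_pow_three_stdGaussian, integral_inner_sq_mul_norm_sq_stdGaussian]

end StdGaussian

lemma integral_sum_sq_pi {ι : Type*} [Fintype ι] {Ω : ι → Type*} [∀ i, MeasurableSpace (Ω i)]
    {μ : ∀ i, Measure (Ω i)} [∀ i, IsProbabilityMeasure (μ i)] {X : ∀ i, Ω i → ℝ}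
    (hX : ∀ i, MemLp (X i) 2 (μ i)) :
    ∫ ω, (∑ i, X i (ω i)) ^ 2 ∂Measure.pi μ
      = ∑ i, Var[X i; μ i] + (∑ i, ∫ x, X i x ∂μ i) ^ 2 := by
  have hXω (i) : MemLp (fun ω => X i (ω i)) 2 (Measure.pi μ) :=
    (hX i).comp_measurePreserving (measurePreserving_eval μ i)
  have hvar := variance_eq_sub (memLp_finsetSum' univ fun i _ => hXω i)
  simp only [variance_sum_pi hX, Pi.pow_apply, Finset.sum_apply] at hvar
  rw [integral_finsetSum _ fun i _ => (hXω i).integrable one_le_two] at hvar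
  simp only [integral_comp_eval (hX _).aestronglyMeasurable] at hvar
  linarith

lemma integral_norm_sampleMean_smul_sq {Ω E : Type*} [MeasurableSpace Ω] [NormedAddCommGroup E]
    [NormedSpace ℝ E] {ν : Measure Ω} [IsProbabilityMeasure ν] {b : Ω → ℝ} (hb : MemLp b 2 ν)
    {m : ℕ} (hm : m ≠ 0) (u : E) :
    ∫ ω, ‖(1 / (m : ℝ)) • ∑ j : Fin m, b (ω j) • u‖ ^ 2 ∂Measure.pi (fun _ => ν)
      = (Var[b; ν] / m + (∫ x, b x ∂ν) ^ 2) * ‖u‖ ^ 2 := by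
  simp_rw [← sum_smul, smul_smul, norm_smul, mul_pow, norm_eq_abs, sq_abs, mul_pow]
  rw [integral_mul_const, integral_const_mul, integral_sum_sq_pi fun _ => hb]
  simp only [sum_const, card_univ, Fintype.card_fin, nsmul_eq_mul]
  field_simp

lemma integral_norm_sampleMean_sub_div_smul_sq_le {Ω E : Type*} [MeasurableSpace Ω]
    [NormedAddCommGroup E] [NormedSpace ℝ E] {ν : Measure Ω} [IsProbabilityMeasure ν]
    {h : Ω → ℝ} (hh : MemLp h 2 ν) {s : ℝ} (hvar : Var[h; ν] ≤ s) (c μ : ℝ) {m : ℕ} (hm : m ≠ 0)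
    (u : E) :
    ∫ ω, ‖(1 / (m : ℝ)) • ∑ j : Fin m, ((h (ω j) - c) / μ) • u‖ ^ 2 ∂Measure.pi (fun _ => ν)
      ≤ (s / (μ ^ 2 * m) + ((∫ x, h x ∂ν - c) / μ) ^ 2) * ‖u‖ ^ 2 := by
  have hb : MemLp (fun x => (h x - c) / μ) 2 ν := by
    simpa only [div_eq_mul_inv, Pi.sub_apply] using (hh.sub (memLp_const c)).mul_const μ⁻¹
  rw [integral_norm_sampleMean_smul_sq hb hm, integral_div,
    integral_sub (hh.integrable one_le_two) (integrable_const c)]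
  simp_rw [div_eq_mul_inv _ μ, variance_mul_const, variance_sub_const hh.aestronglyMeasurable]
  rw [integral_const, probReal_univ, one_smul, show s / (μ ^ 2 * m) = s * μ⁻¹ ^ 2 / m by ring]
  gcongr

lemma abs_sub_sub_inner_gradient_le {E : Type*} [NormedAddCommGroup E] [InnerProductSpace ℝ E]
    [CompleteSpace E] {F : E → ℝ} {H : ℝ} (hH : 0 ≤ H) (hF : Differentiable ℝ F)
    (hL : LipschitzWith H.toNNReal (gradient F)) (x v : E) :
    |F (x + v) - F x - ⟪gradient F x, v⟫| ≤ H * ‖v‖ ^ 2 / 2 := by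
  have hderiv (t : ℝ) : HasDerivAt (fun t : ℝ => F (x + t • v) - F x - t * ⟪gradient F x, v⟫)
      (⟪gradient F (x + t • v) - gradient F x, v⟫) t := by
    have hline : HasDerivAt (fun t : ℝ => x + t • v) v t := by
      simpa using ((hasDerivAt_id t).smul_const v).const_add x
    refine (((hF _).hasGradientAt.hasFDerivAt.comp_hasDerivAt t hline).sub_const (F x)
      |>.sub ((hasDerivAt_id t).mul_const ⟪gradient F x, v⟫)).congr_deriv ?_
    simp [inner_sub_left]
  have hbound (t : ℝ) (ht : t ∈ Ico (0 : ℝ) 1) :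
      ‖⟪gradient F (x + t • v) - gradient F x, v⟫‖ ≤ H * ‖v‖ ^ 2 * t := by
    calc ‖⟪gradient F (x + t • v) - gradient F x, v⟫‖
        ≤ ‖gradient F (x + t • v) - gradient F x‖ * ‖v‖ := norm_inner_le_norm _ _
      _ ≤ H * ‖t • v‖ * ‖v‖ := by
          gcongr
          simpa [dist_eq_norm, Real.coe_toNNReal _ hH] using hL.dist_le_mul (x + t • v) x
      _ = H * ‖v‖ ^ 2 * t := by
          rw [norm_smul, Real.norm_of_nonneg ht.1]
          ring
  have := image_norm_le_of_norm_deriv_right_le_deriv_boundary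
    (B := fun t => H * ‖v‖ ^ 2 * t ^ 2 / 2)
    (fun t _ => (hderiv t).continuousAt.continuousWithinAt) (fun t _ => (hderiv t).hasDerivWithinAt)
    (by simp)
    (fun t => (((hasDerivAt_pow 2 t).const_mul (H * ‖v‖ ^ 2)).div_const 2).congr_deriv (by ring))
    hbound (right_mem_Icc.2 zero_le_one)
  simpa using this

lemma sq_difference_quotient_le {E : Type*} [NormedAddCommGroup E] [InnerProductSpace ℝ E]
    [CompleteSpace E] {F : E → ℝ} {H : ℝ} (hH : 0 ≤ H) (hF : Differentiable ℝ F)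
    (hL : LipschitzWith H.toNNReal (gradient F)) (x u : E) (c : ℝ) {μ : ℝ} (hμ : μ ≠ 0) :
    ((F (x + μ • u) - c) / μ) ^ 2
      ≤ 3 / 4 * μ ^ 2 * H ^ 2 * (‖u‖ ^ 2) ^ 2 + 3 * ⟪gradient F x, u⟫ ^ 2
        + 3 * (F x - c) ^ 2 / μ ^ 2 := by
  set T := F (x + μ • u) - F x - ⟪gradient F x, μ • u⟫
  have hT : |T| ≤ H * ‖μ • u‖ ^ 2 / 2 := abs_sub_sub_inner_gradient_le hH hF hL x (μ • u)
  rw [norm_smul, mul_pow, norm_eq_abs, sq_abs] at hT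
  have hT' : (T / μ) ^ 2 ≤ 1 / 4 * μ ^ 2 * H ^ 2 * (‖u‖ ^ 2) ^ 2 := by
    rw [div_pow, div_le_iff₀ (by positivity)]
    nlinarith [sq_abs T, abs_nonneg T]
  have hsplit : (F (x + μ • u) - c) / μ = T / μ + ⟪gradient F x, u⟫ + (F x - c) / μ := by
    simp only [T, inner_smul_right]
    field_simp
    ring
  rw [hsplit, show 3 * (F x - c) ^ 2 / μ ^ 2 = 3 * ((F x - c) / μ) ^ 2 by ring]
  nlinarith [sq_nonneg (T / μ - ⟪gradient F x, u⟫), sq_nonneg (T / μ - (F x - c) / μ),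
    sq_nonneg (⟪gradient F x, u⟫ - (F x - c) / μ)]

theorem one_point_estimator_second_moment_general
    (d : ℕ) {Ξ : Type*} [MeasurableSpace Ξ]
    (D : Kernel (EuclideanSpace ℝ (Fin d)) Ξ) [IsMarkovKernel D]
    (f : EuclideanSpace ℝ (Fin d) → Ξ → ℝ)
    (F : EuclideanSpace ℝ (Fin d) → ℝ)
    (hF : ∀ y, F y = ∫ ξ, f y ξ ∂(D y))
    -- Assumption 1: bounded sampling variance of the objective values
    (σ : ℝ)
    (hf_sq : ∀ y, MemLp (f y) 2 (D y))
    (hvar : ∀ y, ∫ ξ, (F y - f y ξ) ^ 2 ∂(D y) ≤ σ ^ 2)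
    -- Assumption 4: `F` is `H_F`-smooth
    (H_F : ℝ) (hH_F : 0 ≤ H_F)
    (hFdiff : Differentiable ℝ F)
    (hFgradLip : LipschitzWith H_F.toNNReal (gradient F))
    (x : EuclideanSpace ℝ (Fin d)) (μ : ℝ) (hμ : 0 < μ) (c : ℝ)
    (m : ℕ) (hm : 1 ≤ m) :
    (∫ u, ∫ ξ,
        ‖(1 / (m : ℝ)) • ∑ j : Fin m, ((f (x + μ • u) (ξ j) - c) / μ) • u‖ ^ 2
          ∂(Measure.pi fun _ : Fin m => D (x + μ • u)) ∂(stdGaussian d))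
      ≤ (3 / 2) * μ ^ 2 * H_F ^ 2 * ((d : ℝ) + 6) ^ 3
        + 6 * ((d : ℝ) + 4) * ‖gradient F x‖ ^ 2
        + 3 * σ ^ 2 * (d : ℝ) / (μ ^ 2 * (m : ℝ))
        + 3 * (d : ℝ) * (F x - c) ^ 2 / μ ^ 2 := by
  have hVar (y) : Var[f y; D y] ≤ σ ^ 2 := by
    rw [variance_eq_integral (hf_sq y).aestronglyMeasurable.aemeasurable, ← hF]
    simpa only [sub_sq_comm] using hvar y
  refine (integral_stdGaussian_le_of_le_moments (gradient F x)
    (σ ^ 2 / (μ ^ 2 * m) + 3 * (F x - c) ^ 2 / μ ^ 2) (3 / 4 * μ ^ 2 * H_F ^ 2) 3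
    (fun u => integral_nonneg fun _ => by positivity) fun u => ?_).trans ?_
  · have hmean := sq_difference_quotient_le hH_F hFdiff hFgradLip x u c hμ.ne'
    calc _ ≤ (σ ^ 2 / (μ ^ 2 * m) + ((F (x + μ • u) - c) / μ) ^ 2) * ‖u‖ ^ 2 := by
          simpa only [← hF] using integral_norm_sampleMean_sub_div_smul_sq_le (hf_sq _) (hVar _)
            c μ (by omega) u
      _ ≤ _ := by
          nlinarith [mul_le_mul_of_nonneg_right hmean (sq_nonneg ‖u‖)]
  · have hd : (0 : ℝ) ≤ d := d.cast_nonneg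
    have hcubic : (d : ℝ) * (d + 2) * (d + 4) ≤ 2 * (d + 6) ^ 3 := by
      nlinarith [pow_nonneg hd 2, pow_nonneg hd 3]
    have hA : (σ ^ 2 / (μ ^ 2 * m) + 3 * (F x - c) ^ 2 / μ ^ 2) * d
        = σ ^ 2 * d / (μ ^ 2 * m) + 3 * d * (F x - c) ^ 2 / μ ^ 2 := by ring
    have h3σ : 3 * σ ^ 2 * d / (μ ^ 2 * m) = 3 * (σ ^ 2 * d / (μ ^ 2 * m)) := by ring
    rw [hA, h3σ]
    nlinarith [mul_le_mul_of_nonneg_left hcubic (by positivity : 0 ≤ μ ^ 2 * H_F ^ 2),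
      (by positivity : 0 ≤ σ ^ 2 * d / (μ ^ 2 * m)),
      (by positivity : 0 ≤ ((d : ℝ) + 6) * ‖gradient F x‖ ^ 2)]

/-- Second-moment bound for the mini-batch one-point gradient estimator (Lemma 3). -/
theorem one_point_estimator_second_moment
    (d : ℕ) (hd : 0 < d) {Ξ : Type*} [MeasurableSpace Ξ]
    (D : Kernel (EuclideanSpace ℝ (Fin d)) Ξ) [IsMarkovKernel D]
    (f : EuclideanSpace ℝ (Fin d) → Ξ → ℝ)
    (hf_meas : Measurable (Function.uncurry f))
    (hf_int : ∀ y, Integrable (f y) (D y))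
    (F : EuclideanSpace ℝ (Fin d) → ℝ)
    (hF : ∀ y, F y = ∫ ξ, f y ξ ∂(D y))
    -- Assumption 1: bounded sampling variance of the objective values
    (σ : ℝ) (hσ : 0 ≤ σ)
    (hf_sq : ∀ y, MemLp (f y) 2 (D y))
    (hvar : ∀ y, ∫ ξ, (F y - f y ξ) ^ 2 ∂(D y) ≤ σ ^ 2)
    -- Assumption 4: `F` is `H_F`-smooth
    (H_F : ℝ) (hH_F : 0 ≤ H_F)
    (hFdiff : Differentiable ℝ F)
    (hFgradLip : LipschitzWith H_F.toNNReal (gradient F))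
    (x : EuclideanSpace ℝ (Fin d)) (μ : ℝ) (hμ : 0 < μ) (c : ℝ)
    (m : ℕ) (hm : 1 ≤ m) :
    (∫ u, ∫ ξ,
        ‖(1 / (m : ℝ)) • ∑ j : Fin m, ((f (x + μ • u) (ξ j) - c) / μ) • u‖ ^ 2
          ∂(Measure.pi fun _ : Fin m => D (x + μ • u)) ∂(stdGaussian d))
      ≤ (3 / 2) * μ ^ 2 * H_F ^ 2 * ((d : ℝ) + 6) ^ 3
        + 6 * ((d : ℝ) + 4) * ‖gradient F x‖ ^ 2
        + 3 * σ ^ 2 * (d : ℝ) / (μ ^ 2 * (m : ℝ))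
        + 3 * (d : ℝ) * (F x - c) ^ 2 / μ ^ 2 :=
  one_point_estimator_second_moment_general d D f F hF σ hf_sq hvar H_F hH_F hFdiff hFgradLip x μ hμ
    c m hm
end

section
/- Lipschitz continuity of the decision-dependent objective (Technical Lemma A). Let Ξ be a metric space equipped with its Borel σ-algebra, let D be a Markov kernel from ℝ^d to Ξ, and let f : ℝ^d → Ξ → ℝ be jointly measurable with f(w,·) integrable with respect to D(y) for all w, y ∈ ℝ^d. Assume: (i) for every ξ ∈ Ξ, the map x ↦ f(x,ξ) is L_x-Lipschitz; (ii) for every x ∈ ℝ^d, the map ξ ↦ f(x,ξ) is L_ξ-Lipschitz; (iii) there is α ≥ 0 such that for every K ≥ 0, every K-Lipschitz function g : Ξ → ℝ that is integrable with respect to D(x) and D(x'), and every x, x' ∈ ℝ^d, |∫ g dD(x) − ∫ g dD(x')| ≤ K·α·‖x − x'‖. Then F(x) := ∫ f(x,ξ) dD(x)(ξ) is (L_x + α·L_ξ)-Lipschitz on ℝ^d. -/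
open MeasureTheory ProbabilityTheory

/-- Lipschitz continuity of the decision-dependent objective (Technical Lemma A). -/
theorem objective_lipschitz
    (d : ℕ) (hd : 0 < d)
    {Ξ : Type*} [MetricSpace Ξ] [MeasurableSpace Ξ] [BorelSpace Ξ]
    (D : Kernel (EuclideanSpace ℝ (Fin d)) Ξ) [IsMarkovKernel D]
    (f : EuclideanSpace ℝ (Fin d) → Ξ → ℝ)
    (hf_meas : Measurable (Function.uncurry f))
    (hf_int : ∀ w y, Integrable (f w) (D y))
    (L_x L_ξ α : ℝ) (hL_x : 0 ≤ L_x) (hL_ξ : 0 ≤ L_ξ) (hα : 0 ≤ α)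
    -- (i) `f` is `L_x`-Lipschitz in the decision variable
    (hfx : ∀ ξ, LipschitzWith L_x.toNNReal fun x => f x ξ)
    -- (ii) `f` is `L_ξ`-Lipschitz in the random variable
    (hfξ : ∀ x, LipschitzWith L_ξ.toNNReal (f x))
    -- (iii) Kantorovich–Rubinstein duality consequence of the Wasserstein-1
    -- Lipschitz continuity of `x ↦ D x`
    (hker : ∀ K : ℝ, 0 ≤ K → ∀ g : Ξ → ℝ, LipschitzWith K.toNNReal g →
      ∀ x x' : EuclideanSpace ℝ (Fin d), Integrable g (D x) → Integrable g (D x') →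
        |(∫ ξ, g ξ ∂(D x)) - ∫ ξ, g ξ ∂(D x')| ≤ K * α * ‖x - x'‖)
    (F : EuclideanSpace ℝ (Fin d) → ℝ)
    (hF : ∀ y, F y = ∫ ξ, f y ξ ∂(D y)) :
    LipschitzWith (L_x + α * L_ξ).toNNReal F := by
  apply LipschitzWith.of_dist_le_mul
  intro x x'
  rw [Real.coe_toNNReal _ (by positivity)]
  rw [hF, hF, Real.dist_eq]
  have h1 : |(∫ ξ, f x ξ ∂(D x)) - ∫ ξ, f x' ξ ∂(D x)| ≤ L_x * ‖x - x'‖ := by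
    rw [← integral_sub (hf_int x x) (hf_int x' x)]
    calc |∫ ξ, (f x ξ - f x' ξ) ∂(D x)| ≤ ∫ ξ, |f x ξ - f x' ξ| ∂(D x) := by
          simpa [Real.norm_eq_abs] using
            norm_integral_le_integral_norm (μ := D x) fun ξ => f x ξ - f x' ξ
      _ ≤ ∫ _, L_x * ‖x - x'‖ ∂(D x) := by
          apply integral_mono_of_nonneg (Filter.Eventually.of_forall fun ξ => abs_nonneg _)
            (integrable_const _)
          refine Filter.Eventually.of_forall fun ξ => ?_
          have := (hfx ξ).dist_le_mul x x'
          rw [Real.dist_eq, Real.coe_toNNReal _ hL_x] at this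
          simpa [dist_eq_norm] using this
      _ = L_x * ‖x - x'‖ := by simp
  have h2 : |(∫ ξ, f x' ξ ∂(D x)) - ∫ ξ, f x' ξ ∂(D x')| ≤ L_ξ * α * ‖x - x'‖ :=
    hker L_ξ hL_ξ (f x') (hfξ x') x x' (hf_int x' x) (hf_int x' x')
  calc |(∫ ξ, f x ξ ∂(D x)) - ∫ ξ, f x' ξ ∂(D x')|
      ≤ |(∫ ξ, f x ξ ∂(D x)) - ∫ ξ, f x' ξ ∂(D x)|
        + |(∫ ξ, f x' ξ ∂(D x)) - ∫ ξ, f x' ξ ∂(D x')| := abs_sub_le _ _ _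
    _ ≤ L_x * ‖x - x'‖ + L_ξ * α * ‖x - x'‖ := add_le_add h1 h2
    _ = (L_x + α * L_ξ) * dist x x' := by rw [dist_eq_norm]; ring
end
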